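/- arXiv:1904.06811 — 6 statements merged into one kernel-verified Lean document; each statement's English description precedes it below -/
import Mathlib

section
/- Let R be a commutative ring, Ψ : R_1 = R[v]/(v^2-v) → R × R the isomorphism Ψ(a + b v) = (a, a+b), extended coordinatewise to Ψ̄ : R_1^n → R^n × R^n. A subset C ⊆ R_1^n is an R_1-submodule if and only if there exist R-submodules C_1, C_2 ⊆ R^n with Ψ̄(C) = C_1 × C_2. -/
open Polynomial

/-!
A ring isomorphism `Ψ : S ≃+* A × B` splits `S` along the idempotents `e₁ = Ψ⁻¹(1, 0)` and
`e₂ = Ψ⁻¹(0, 1)`, and coordinatewise it identifies `Sⁿ` with `Aⁿ × Bⁿ`, scalars acting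
componentwise. An `S`-submodule `P` is closed under `c, d ↦ e₁ • c + e₂ • d`, which realises
any pair of first and second components of elements of `P`; so the image of `P` is the product
of its two projections, each a submodule since `Ψ⁻¹(a, 0)` and `Ψ⁻¹(0, b)` act on them as `a` and
`b`. Conversely, the preimage of a product of submodules is closed under `S`-scalars because
`s` acts as `(Ψ s).1` and `(Ψ s).2` on the two factors.
-/

namespace RingEquiv

variable {ι S A B : Type*} [Semiring S] [Semiring A] [Semiring B] (Ψ : S ≃+* A × B)

def piSplit (c : ι → S) : (ι → A) × (ι → B) :=
  (fun i => (Ψ (c i)).1, fun i => (Ψ (c i)).2)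

theorem piSplit_injective : Function.Injective (Ψ.piSplit (ι := ι)) := by
  intro c d h
  funext i
  exact Ψ.injective (Prod.ext (congrFun (congrArg Prod.fst h) i)
    (congrFun (congrArg Prod.snd h) i))

@[simp]
theorem piSplit_zero : Ψ.piSplit (0 : ι → S) = 0 := by
  ext i <;> simp [piSplit]

@[simp]
theorem piSplit_add (c d : ι → S) : Ψ.piSplit (c + d) = Ψ.piSplit c + Ψ.piSplit d := by
  ext i <;> simp [piSplit]

theorem piSplit_smul (s : S) (c : ι → S) :
    Ψ.piSplit (s • c) = ((Ψ s).1 • (Ψ.piSplit c).1, (Ψ s).2 • (Ψ.piSplit c).2) := by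
  ext i <;> simp [piSplit]

theorem piSplit_idempotent_combination (c d : ι → S) :
    Ψ.piSplit (Ψ.symm (1, 0) • c + Ψ.symm (0, 1) • d) = ((Ψ.piSplit c).1, (Ψ.piSplit d).2) := by
  simp only [piSplit_add, piSplit_smul, apply_symm_apply]
  ext <;> simp

def piSplitFst (P : Submodule S (ι → S)) : Submodule A (ι → A) where
  carrier := (fun c => (Ψ.piSplit c).1) '' P
  zero_mem' := ⟨0, P.zero_mem, by simp⟩
  add_mem' := by
    rintro _ _ ⟨c, hc, rfl⟩ ⟨d, hd, rfl⟩
    exact ⟨c + d, P.add_mem hc hd, by simp⟩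
  smul_mem' := by
    rintro a _ ⟨c, hc, rfl⟩
    exact ⟨Ψ.symm (a, 0) • c, P.smul_mem _ hc, by simp [piSplit_smul]⟩

def piSplitSnd (P : Submodule S (ι → S)) : Submodule B (ι → B) where
  carrier := (fun c => (Ψ.piSplit c).2) '' P
  zero_mem' := ⟨0, P.zero_mem, by simp⟩
  add_mem' := by
    rintro _ _ ⟨c, hc, rfl⟩ ⟨d, hd, rfl⟩
    exact ⟨c + d, P.add_mem hc hd, by simp⟩
  smul_mem' := by
    rintro b _ ⟨c, hc, rfl⟩
    exact ⟨Ψ.symm (0, b) • c, P.smul_mem _ hc, by simp [piSplit_smul]⟩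

theorem image_piSplit_eq_prod (P : Submodule S (ι → S)) :
    Ψ.piSplit '' (P : Set (ι → S)) =
      (Ψ.piSplitFst P : Set (ι → A)) ×ˢ (Ψ.piSplitSnd P : Set (ι → B)) := by
  ext p
  constructor
  · rintro ⟨c, hc, rfl⟩
    exact ⟨⟨c, hc, rfl⟩, ⟨c, hc, rfl⟩⟩
  · rintro ⟨⟨c, hc, hc₁⟩, ⟨d, hd, hd₂⟩⟩
    exact ⟨_, P.add_mem (P.smul_mem _ hc) (P.smul_mem _ hd),
      (Ψ.piSplit_idempotent_combination c d).trans (Prod.ext hc₁ hd₂)⟩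

def piSplitComap (C₁ : Submodule A (ι → A)) (C₂ : Submodule B (ι → B)) :
    Submodule S (ι → S) where
  carrier := Ψ.piSplit ⁻¹' ((C₁ : Set (ι → A)) ×ˢ (C₂ : Set (ι → B)))
  zero_mem' := by simp
  add_mem' := by
    rintro c d ⟨hc₁, hc₂⟩ ⟨hd₁, hd₂⟩
    simpa using ⟨C₁.add_mem hc₁ hd₁, C₂.add_mem hc₂ hd₂⟩
  smul_mem' := by
    rintro s c ⟨hc₁, hc₂⟩
    simpa [piSplit_smul] using ⟨C₁.smul_mem _ hc₁, C₂.smul_mem _ hc₂⟩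

theorem exists_submodule_iff_image_piSplit_eq_prod (C : Set (ι → S)) :
    (∃ P : Submodule S (ι → S), (P : Set (ι → S)) = C) ↔
      ∃ (C₁ : Submodule A (ι → A)) (C₂ : Submodule B (ι → B)),
        Ψ.piSplit '' C = (C₁ : Set (ι → A)) ×ˢ (C₂ : Set (ι → B)) := by
  constructor
  · rintro ⟨P, rfl⟩
    exact ⟨_, _, Ψ.image_piSplit_eq_prod P⟩
  · rintro ⟨C₁, C₂, hC⟩
    refine ⟨Ψ.piSplitComap C₁ C₂, ?_⟩
    change Ψ.piSplit ⁻¹' ((C₁ : Set (ι → A)) ×ˢ (C₂ : Set (ι → B))) = C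
    rw [← hC, Set.preimage_image_eq C Ψ.piSplit_injective]

end RingEquiv

theorem stmt8_general (R : Type*) [CommRing R] (n : ℕ)
    (Ψ : AdjoinRoot (X ^ 2 - X : R[X]) ≃+* R × R)
    (C : Set (Fin n → AdjoinRoot (X ^ 2 - X : R[X]))) :
    (∃ C' : Submodule (AdjoinRoot (X ^ 2 - X : R[X]))
        (Fin n → AdjoinRoot (X ^ 2 - X : R[X])), (C' : Set _) = C) ↔
    (∃ C₁ C₂ : Submodule R (Fin n → R),
      (fun c : Fin n → AdjoinRoot (X ^ 2 - X : R[X]) =>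
          ((fun i => (Ψ (c i)).1, fun i => (Ψ (c i)).2) : (Fin n → R) × (Fin n → R))) '' C =
        (C₁ : Set (Fin n → R)) ×ˢ (C₂ : Set (Fin n → R))) :=
  Ψ.exists_submodule_iff_image_piSplit_eq_prod C

/-- With `Ψ : R₁ ≅ R × R`, `Ψ(a + bv) = (a, a+b)`, extended coordinatewise to
`Ψ̄ : R₁ⁿ → Rⁿ × Rⁿ`: a subset `C ⊆ R₁ⁿ` is an `R₁`-submodule iff there are
`R`-submodules `C₁, C₂ ⊆ Rⁿ` with `Ψ̄(C) = C₁ × C₂`. -/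
theorem stmt8 (R : Type*) [CommRing R] (n : ℕ)
    (Ψ : AdjoinRoot (X ^ 2 - X : R[X]) ≃+* R × R)
    (hΨ : ∀ a b : R,
      Ψ (AdjoinRoot.of _ a + AdjoinRoot.of _ b * AdjoinRoot.root _) = (a, a + b))
    (C : Set (Fin n → AdjoinRoot (X ^ 2 - X : R[X]))) :
    (∃ C' : Submodule (AdjoinRoot (X ^ 2 - X : R[X]))
        (Fin n → AdjoinRoot (X ^ 2 - X : R[X])), (C' : Set _) = C) ↔
    (∃ C₁ C₂ : Submodule R (Fin n → R),
      (fun c : Fin n → AdjoinRoot (X ^ 2 - X : R[X]) =>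
          ((fun i => (Ψ (c i)).1, fun i => (Ψ (c i)).2) : (Fin n → R) × (Fin n → R))) '' C =
        (C₁ : Set (Fin n → R)) ×ˢ (C₂ : Set (Fin n → R))) :=
  stmt8_general R n Ψ C
end

section
/- Let R be a finite commutative ring with Ψ̄ : R_1^n ≅ R^n × R^n as above. If C = Ψ̄^{-1}(C_1 × C_2) for linear codes C_1, C_2 over R (both nonzero), then the minimum Hamming distance of C equals the minimum of the minimum Hamming distances of C_1 and C_2. -/
/-!
Write `Ψ̄ c = (c₁, c₂)`. Since `Ψ x = 0 ↔ x = 0`, a coordinate of `c` vanishes exactly when the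
corresponding coordinates of both `c₁` and `c₂` vanish; hence `wt c₁ ≤ wt c` and `wt c₂ ≤ wt c`,
and one of `c₁, c₂` is nonzero when `c` is, giving `min d₁ d₂ ≤ d`. Conversely `Ψ̄⁻¹(x, 0)` and
`Ψ̄⁻¹(0, y)` lie in `C` and have the same weights as `x` and `y`, giving `d ≤ min d₁ d₂`.
-/

open Polynomial

section MinWeight

variable {ι M N : Type*} [Zero M] [Zero N]

noncomputable def hammingWeight (c : ι → M) : ℕ := Nat.card {i // c i ≠ 0}

/-- Junk value: `0` when `C` has no nonzero word. -/
noncomputable def minWeight (C : Set (ι → M)) : ℕ :=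
  sInf {d | ∃ c ∈ C, c ≠ 0 ∧ hammingWeight c = d}

theorem hammingWeight_le_of_forall_eq_zero [Finite ι] {c : ι → M} {d : ι → N}
    (h : ∀ i, c i = 0 → d i = 0) : hammingWeight d ≤ hammingWeight c :=
  Nat.card_le_card_of_injective (fun i => ⟨i.1, mt (h i.1) i.2⟩)
    fun _ _ hij => Subtype.ext (congrArg Subtype.val hij :)

theorem hammingWeight_comp {f : M → N} (hf : ∀ x, f x = 0 ↔ x = 0) (c : ι → M) :
    hammingWeight (fun i => f (c i)) = hammingWeight c :=
  Nat.card_congr (Equiv.subtypeEquivRight fun i => not_congr (hf (c i)))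

theorem comp_ne_zero {f : M → N} (hf : ∀ x, f x = 0 ↔ x = 0) {c : ι → M} (hc : c ≠ 0) :
    (fun i => f (c i)) ≠ 0 := by
  simpa [funext_iff, hf] using hc

theorem minWeight_le {C : Set (ι → M)} {c : ι → M} (hc : c ∈ C) (h0 : c ≠ 0) :
    minWeight C ≤ hammingWeight c :=
  Nat.sInf_le ⟨c, hc, h0, rfl⟩

theorem exists_hammingWeight_eq_minWeight {C : Set (ι → M)} (hC : ∃ c ∈ C, c ≠ 0) :
    ∃ c ∈ C, c ≠ 0 ∧ hammingWeight c = minWeight C := by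
  obtain ⟨c, hc, h0⟩ := hC
  exact Nat.sInf_mem (s := {d | ∃ c ∈ C, c ≠ 0 ∧ hammingWeight c = d}) ⟨_, c, hc, h0, rfl⟩

theorem minWeight_le_minWeight {C : Set (ι → M)} {D : Set (ι → N)} (hD : ∃ d ∈ D, d ≠ 0)
    (h : ∀ d ∈ D, d ≠ 0 → ∃ c ∈ C, c ≠ 0 ∧ hammingWeight c ≤ hammingWeight d) :
    minWeight C ≤ minWeight D := by
  obtain ⟨d, hd, hd0, hwd⟩ := exists_hammingWeight_eq_minWeight hD
  obtain ⟨c, hc, hc0, hwc⟩ := h d hd hd0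
  exact hwd ▸ (minWeight_le hc hc0).trans hwc

end MinWeight

section ProdCode

variable {ι M A B : Type*} [AddZeroClass M] [AddZeroClass A] [AddZeroClass B]

/-- The code `Ψ̄⁻¹(S₁ × S₂)`, where `Ψ̄` applies `e` coordinatewise. -/
def prodCode (e : M ≃+ A × B) (S₁ : Set (ι → A)) (S₂ : Set (ι → B)) : Set (ι → M) :=
  {c | (fun i => (e (c i)).1) ∈ S₁ ∧ (fun i => (e (c i)).2) ∈ S₂}

variable (e : M ≃+ A × B) {S₁ : Set (ι → A)} {S₂ : Set (ι → B)}

theorem exists_prodCode_of_mem_left (h0 : (0 : ι → B) ∈ S₂) {x : ι → A} (hx : x ∈ S₁)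
    (hx0 : x ≠ 0) : ∃ c ∈ prodCode e S₁ S₂, c ≠ 0 ∧ hammingWeight c = hammingWeight x := by
  have hf : ∀ a : A, e.symm (a, 0) = 0 ↔ a = 0 := by simp [map_eq_zero_iff _ e.symm.injective]
  refine ⟨fun i => e.symm (x i, 0), ⟨?_, ?_⟩, comp_ne_zero hf hx0, hammingWeight_comp hf x⟩
  · simpa using hx
  · simp only [AddEquiv.apply_symm_apply]
    exact h0

theorem exists_prodCode_of_mem_right (h0 : (0 : ι → A) ∈ S₁) {y : ι → B} (hy : y ∈ S₂)
    (hy0 : y ≠ 0) : ∃ c ∈ prodCode e S₁ S₂, c ≠ 0 ∧ hammingWeight c = hammingWeight y := by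
  have hf : ∀ b : B, e.symm (0, b) = 0 ↔ b = 0 := by simp [map_eq_zero_iff _ e.symm.injective]
  refine ⟨fun i => e.symm (0, y i), ⟨?_, ?_⟩, comp_ne_zero hf hy0, hammingWeight_comp hf y⟩
  · simp only [AddEquiv.apply_symm_apply]
    exact h0
  · simpa using hy

theorem min_minWeight_le_hammingWeight [Finite ι] {c : ι → M} (hc : c ∈ prodCode e S₁ S₂)
    (hc0 : c ≠ 0) : min (minWeight S₁) (minWeight S₂) ≤ hammingWeight c := by
  have hfst : ∀ i, c i = 0 → (e (c i)).1 = 0 := fun i h => by simp [h]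
  have hsnd : ∀ i, c i = 0 → (e (c i)).2 = 0 := fun i h => by simp [h]
  by_cases h₁ : (fun i => (e (c i)).1) = 0
  · have h₂ : (fun i => (e (c i)).2) ≠ 0 := by
      refine fun h₂ => hc0 (funext fun i => e.injective (Prod.ext ?_ ?_))
      · simpa using congrFun h₁ i
      · simpa using congrFun h₂ i
    exact (min_le_right _ _).trans
      ((minWeight_le hc.2 h₂).trans (hammingWeight_le_of_forall_eq_zero hsnd))
  · exact (min_le_left _ _).trans
      ((minWeight_le hc.1 h₁).trans (hammingWeight_le_of_forall_eq_zero hfst))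

theorem minWeight_prodCode [Finite ι] (h0₁ : (0 : ι → A) ∈ S₁) (h0₂ : (0 : ι → B) ∈ S₂)
    (h₁ : ∃ x ∈ S₁, x ≠ 0) (h₂ : ∃ y ∈ S₂, y ≠ 0) :
    minWeight (prodCode e S₁ S₂) = min (minWeight S₁) (minWeight S₂) := by
  apply le_antisymm
  · refine le_min (minWeight_le_minWeight h₁ fun x hx hx0 => ?_)
      (minWeight_le_minWeight h₂ fun y hy hy0 => ?_)
    · obtain ⟨c, hc, hc0, hw⟩ := exists_prodCode_of_mem_left e h0₂ hx hx0
      exact ⟨c, hc, hc0, hw.le⟩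
    · obtain ⟨c, hc, hc0, hw⟩ := exists_prodCode_of_mem_right e h0₁ hy hy0
      exact ⟨c, hc, hc0, hw.le⟩
  · obtain ⟨x, hx, hx0⟩ := h₁
    obtain ⟨c₀, hc₀, hc₀0, -⟩ := exists_prodCode_of_mem_left e h0₂ hx hx0
    obtain ⟨c, hc, hc0, hw⟩ := exists_hammingWeight_eq_minWeight ⟨c₀, hc₀, hc₀0⟩
    exact hw ▸ min_minWeight_le_hammingWeight e hc hc0

end ProdCode

theorem stmt9_general (R : Type*) [CommRing R] (n : ℕ)
    (Ψ : AdjoinRoot (X ^ 2 - X : R[X]) ≃+* R × R)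
    (C₁ C₂ : Submodule R (Fin n → R)) (h₁ : C₁ ≠ ⊥) (h₂ : C₂ ≠ ⊥)
    (C : Set (Fin n → AdjoinRoot (X ^ 2 - X : R[X])))
    (hC : C = {c | (fun i => (Ψ (c i)).1) ∈ C₁ ∧ (fun i => (Ψ (c i)).2) ∈ C₂}) :
    sInf {d : ℕ | ∃ c ∈ C, c ≠ 0 ∧ Nat.card {i : Fin n // c i ≠ 0} = d} =
      min (sInf {d : ℕ | ∃ c ∈ C₁, c ≠ 0 ∧ Nat.card {i : Fin n // c i ≠ 0} = d})
        (sInf {d : ℕ | ∃ c ∈ C₂, c ≠ 0 ∧ Nat.card {i : Fin n // c i ≠ 0} = d}) := by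
  subst hC
  exact minWeight_prodCode Ψ.toAddEquiv C₁.zero_mem C₂.zero_mem
    ((Submodule.ne_bot_iff C₁).mp h₁) ((Submodule.ne_bot_iff C₂).mp h₂)

/-- If `C = Ψ̄⁻¹(C₁ × C₂)` for nonzero linear codes `C₁, C₂` over a finite commutative
ring `R`, then the minimum Hamming distance of `C` is the minimum of those of `C₁`
and `C₂`.  (Hamming weight of `x` is the number of nonzero coordinates.) -/
theorem stmt9 (R : Type*) [CommRing R] [Finite R] (n : ℕ)
    (Ψ : AdjoinRoot (X ^ 2 - X : R[X]) ≃+* R × R)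
    (hΨ : ∀ a b : R,
      Ψ (AdjoinRoot.of _ a + AdjoinRoot.of _ b * AdjoinRoot.root _) = (a, a + b))
    (C₁ C₂ : Submodule R (Fin n → R)) (h₁ : C₁ ≠ ⊥) (h₂ : C₂ ≠ ⊥)
    (C : Set (Fin n → AdjoinRoot (X ^ 2 - X : R[X])))
    (hC : C = {c | (fun i => (Ψ (c i)).1) ∈ C₁ ∧ (fun i => (Ψ (c i)).2) ∈ C₂}) :
    sInf {d : ℕ | ∃ c ∈ C, c ≠ 0 ∧ Nat.card {i : Fin n // c i ≠ 0} = d} =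
      min (sInf {d : ℕ | ∃ c ∈ C₁, c ≠ 0 ∧ Nat.card {i : Fin n // c i ≠ 0} = d})
        (sInf {d : ℕ | ∃ c ∈ C₂, c ≠ 0 ∧ Nat.card {i : Fin n // c i ≠ 0} = d}) :=
  stmt9_general R n Ψ C₁ C₂ h₁ h₂ C hC
end

section
/- Let R be a commutative ring and Ψ̄ : R_1^n ≅ R^n × R^n the coordinatewise extension of Ψ(a + b v) = (a, a+b). A submodule C ⊆ R_1^n with Ψ̄(C) = C_1 × C_2 is cyclic (invariant under the cyclic shift) if and only if both C_1 and C_2 are cyclic codes over R. -/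
/-!
Ψ̄ is injective and commutes with the cyclic shift, which on `Rⁿ × Rⁿ` acts on each factor
separately. So `C` is shift-invariant iff its image `C₁ × C₂` is, and since both factors are
nonempty, a product of sets is invariant under a product map iff each factor is.
-/

open Polynomial Function

section

variable {ι M α β : Type*}

theorem Function.Semiconj.image_eq_self_iff {f : α → β} {ga : α → α} {gb : β → β}
    (hf : Injective f) (h : Semiconj f ga gb) (s : Set α) :
    ga '' s = s ↔ gb '' (f '' s) = f '' s := by
  rw [← h.set_image s]
  exact hf.image_injective.eq_iff.symm

theorem Set.prodMap_image_prod_eq_self_iff {g₁ : α → α} {g₂ : β → β} {A : Set α} {B : Set β}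
    (hA : A.Nonempty) (hB : B.Nonempty) :
    Prod.map g₁ g₂ '' A ×ˢ B = A ×ˢ B ↔ g₁ '' A = A ∧ g₂ '' B = B := by
  rw [Set.prodMap_image_prod]
  exact Set.prod_eq_prod_iff_of_nonempty ((hA.image g₁).prod (hB.image g₂))

/-- The coordinatewise extension `Ψ̄` of a map `e : M → α × β` to vectors indexed by `ι`. -/
def splitCoords (e : M → α × β) (c : ι → M) : (ι → α) × (ι → β) :=
  (fun i => (e (c i)).1, fun i => (e (c i)).2)

theorem splitCoords_injective {e : M → α × β} (he : Injective e) :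
    Injective (splitCoords (ι := ι) e) := fun _ _ h =>
  funext fun i => he (Prod.ext (congrFun (congrArg Prod.fst h) i)
    (congrFun (congrArg Prod.snd h) i))

theorem semiconj_splitCoords_comp (e : M → α × β) (σ : ι → ι) :
    Semiconj (splitCoords e) (· ∘ σ) (Prod.map (· ∘ σ) (· ∘ σ)) := fun _ => rfl

theorem comp_image_eq_self_iff_of_splitCoords_image_eq_prod {e : M → α × β} (he : Injective e)
    (σ : ι → ι) {S : Set (ι → M)} {A : Set (ι → α)} {B : Set (ι → β)}
    (hA : A.Nonempty) (hB : B.Nonempty) (hS : splitCoords e '' S = A ×ˢ B) :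
    (· ∘ σ) '' S = S ↔ (· ∘ σ) '' A = A ∧ (· ∘ σ) '' B = B := by
  rw [(semiconj_splitCoords_comp e σ).image_eq_self_iff (splitCoords_injective he), hS]
  exact Set.prodMap_image_prod_eq_self_iff hA hB

end

theorem stmt10_general (R : Type*) [CommRing R] (n : ℕ) [NeZero n]
    (Ψ : AdjoinRoot (X ^ 2 - X : R[X]) ≃+* R × R)
    (C : Submodule (AdjoinRoot (X ^ 2 - X : R[X])) (Fin n → AdjoinRoot (X ^ 2 - X : R[X])))
    (C₁ C₂ : Submodule R (Fin n → R))
    (hC : (fun c : Fin n → AdjoinRoot (X ^ 2 - X : R[X]) =>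
        ((fun i => (Ψ (c i)).1, fun i => (Ψ (c i)).2) : (Fin n → R) × (Fin n → R))) ''
          (C : Set _) = (C₁ : Set (Fin n → R)) ×ˢ (C₂ : Set (Fin n → R))) :
    ((fun c : Fin n → AdjoinRoot (X ^ 2 - X : R[X]) => fun i => c (i - 1)) '' (C : Set _)
        = (C : Set _)) ↔
      ((fun c : Fin n → R => fun i => c (i - 1)) '' (C₁ : Set _) = (C₁ : Set _) ∧
       (fun c : Fin n → R => fun i => c (i - 1)) '' (C₂ : Set _) = (C₂ : Set _)) :=
  comp_image_eq_self_iff_of_splitCoords_image_eq_prod Ψ.injective (· - 1)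
    ⟨0, C₁.zero_mem⟩ ⟨0, C₂.zero_mem⟩ hC

/-- With `Ψ̄ : R₁ⁿ ≅ Rⁿ × Rⁿ` and `Ψ̄(C) = C₁ × C₂`, the code `C` is cyclic
(invariant under the cyclic shift `c ↦ (i ↦ c (i-1))`) iff `C₁` and `C₂` are cyclic. -/
theorem stmt10 (R : Type*) [CommRing R] (n : ℕ) [NeZero n]
    (Ψ : AdjoinRoot (X ^ 2 - X : R[X]) ≃+* R × R)
    (hΨ : ∀ a b : R,
      Ψ (AdjoinRoot.of _ a + AdjoinRoot.of _ b * AdjoinRoot.root _) = (a, a + b))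
    (C : Submodule (AdjoinRoot (X ^ 2 - X : R[X])) (Fin n → AdjoinRoot (X ^ 2 - X : R[X])))
    (C₁ C₂ : Submodule R (Fin n → R))
    (hC : (fun c : Fin n → AdjoinRoot (X ^ 2 - X : R[X]) =>
        ((fun i => (Ψ (c i)).1, fun i => (Ψ (c i)).2) : (Fin n → R) × (Fin n → R))) ''
          (C : Set _) = (C₁ : Set (Fin n → R)) ×ˢ (C₂ : Set (Fin n → R))) :
    ((fun c : Fin n → AdjoinRoot (X ^ 2 - X : R[X]) => fun i => c (i - 1)) '' (C : Set _)
        = (C : Set _)) ↔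
      ((fun c : Fin n → R => fun i => c (i - 1)) '' (C₁ : Set _) = (C₁ : Set _) ∧
       (fun c : Fin n → R => fun i => c (i - 1)) '' (C₂ : Set _) = (C₂ : Set _)) :=
  stmt10_general R n Ψ C C₁ C₂ hC
end

section
/- Let R be a finite commutative ring and Ψ̄ : R_1^n ≅ R^n × R^n as above, where the Euclidean inner product on S^n is x·y = Σ_i x_i y_i. For submodules C_1, C_2 ⊆ R^n and C = Ψ̄^{-1}(C_1 × C_2), the Euclidean dual satisfies C^⊥ = Ψ̄^{-1}(C_1^⊥ × C_2^⊥). In particular, C is Euclidean self-dual if and only if C_1 and C_2 are both Euclidean self-dual. -/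
open Polynomial
set_option maxHeartbeats 1000000

/-! Since `Ψ` is a ring isomorphism, `Ψ (∑ xᵢ yᵢ) = (∑ xᵢ¹ yᵢ¹, ∑ xᵢ² yᵢ²)`, so `x` and `y` are
orthogonal exactly when both of their components are. Testing `y` against the vectors
`Ψ̄⁻¹(x₁, 0)` and `Ψ̄⁻¹(0, x₂)` of `C` then splits the dual of `C` into the duals of `C₁` and
`C₂`; self-duality splits because `Ψ̄` is surjective and `C₁ × C₂` is nonempty. -/

section EuclideanDual

variable {ι S A B : Type*} [Fintype ι] [CommSemiring S] [CommSemiring A] [CommSemiring B]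

def euclideanDual (C : Set (ι → S)) : Set (ι → S) :=
  {y | ∀ x ∈ C, ∑ i, x i * y i = 0}

/-- The map `Ψ̄` of the paper, for `e = Ψ`. -/
def RingEquiv.piSplit_s14 (e : S ≃+* A × B) : (ι → S) ≃ (ι → A) × (ι → B) where
  toFun c := (fun i => (e (c i)).1, fun i => (e (c i)).2)
  invFun p i := e.symm (p.1 i, p.2 i)
  left_inv c := by simp
  right_inv p := by simp

variable (e : S ≃+* A × B)

theorem RingEquiv.sum_mul_eq_zero_iff (x y : ι → S) :
    ∑ i, x i * y i = 0 ↔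
      ∑ i, (e.piSplit_s14 x).1 i * (e.piSplit_s14 y).1 i = 0 ∧
        ∑ i, (e.piSplit_s14 x).2 i * (e.piSplit_s14 y).2 i = 0 := by
  rw [← map_eq_zero_iff e e.injective, map_sum, Prod.ext_iff]
  simp [RingEquiv.piSplit_s14, Prod.fst_sum, Prod.snd_sum]

theorem euclideanDual_preimage_piSplit_prod {C₁ : Set (ι → A)} {C₂ : Set (ι → B)}
    (h₁ : 0 ∈ C₁) (h₂ : 0 ∈ C₂) :
    euclideanDual (e.piSplit_s14 ⁻¹' C₁ ×ˢ C₂) =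
      e.piSplit_s14 ⁻¹' euclideanDual C₁ ×ˢ euclideanDual C₂ := by
  ext y
  simp only [euclideanDual, Set.mem_preimage, Set.mem_prod, Set.mem_ofPred_eq,
    e.sum_mul_eq_zero_iff]
  constructor
  · intro hy
    refine ⟨fun x₁ hx₁ => ?_, fun x₂ hx₂ => ?_⟩
    · simpa using (hy (e.piSplit_s14.symm (x₁, 0)) (by simpa using ⟨hx₁, h₂⟩)).1
    · simpa using (hy (e.piSplit_s14.symm (0, x₂)) (by simpa using ⟨h₁, hx₂⟩)).2
  · rintro ⟨hy₁, hy₂⟩ x ⟨hx₁, hx₂⟩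
    exact ⟨hy₁ _ hx₁, hy₂ _ hx₂⟩

theorem preimage_piSplit_prod_eq_euclideanDual_iff {C₁ : Set (ι → A)} {C₂ : Set (ι → B)}
    (h₁ : 0 ∈ C₁) (h₂ : 0 ∈ C₂) :
    e.piSplit_s14 ⁻¹' C₁ ×ˢ C₂ = euclideanDual (e.piSplit_s14 ⁻¹' C₁ ×ˢ C₂) ↔
      C₁ = euclideanDual C₁ ∧ C₂ = euclideanDual C₂ := by
  rw [euclideanDual_preimage_piSplit_prod e h₁ h₂,
    (Set.preimage_injective.2 e.piSplit_s14.surjective).eq_iff]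
  exact Set.prod_eq_prod_iff_of_nonempty ⟨0, h₁, h₂⟩

end EuclideanDual

theorem stmt14_general (R : Type*) [CommRing R] (n : ℕ)
    (Ψ : AdjoinRoot (X ^ 2 - X : R[X]) ≃+* R × R)
    (C₁ C₂ : Submodule R (Fin n → R))
    (C : Set (Fin n → AdjoinRoot (X ^ 2 - X : R[X])))
    (hC : C = {c | (fun i => (Ψ (c i)).1) ∈ C₁ ∧ (fun i => (Ψ (c i)).2) ∈ C₂}) :
    ({y | ∀ x ∈ C, ∑ i, x i * y i = 0} : Set (Fin n → AdjoinRoot (X ^ 2 - X : R[X]))) =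
      {y | (fun i => (Ψ (y i)).1) ∈ {z : Fin n → R | ∀ x ∈ C₁, ∑ i, x i * z i = 0} ∧
           (fun i => (Ψ (y i)).2) ∈ {z : Fin n → R | ∀ x ∈ C₂, ∑ i, x i * z i = 0}} ∧
    (C = {y | ∀ x ∈ C, ∑ i, x i * y i = 0} ↔
      ((C₁ : Set (Fin n → R)) = {z | ∀ x ∈ C₁, ∑ i, x i * z i = 0} ∧
       (C₂ : Set (Fin n → R)) = {z | ∀ x ∈ C₂, ∑ i, x i * z i = 0})) := by
  have hC' : C = Ψ.piSplit_s14 ⁻¹' (C₁ : Set (Fin n → R)) ×ˢ (C₂ : Set (Fin n → R)) := hC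
  subst hC'
  exact ⟨euclideanDual_preimage_piSplit_prod Ψ C₁.zero_mem C₂.zero_mem,
    preimage_piSplit_prod_eq_euclideanDual_iff Ψ C₁.zero_mem C₂.zero_mem⟩

/-- For `C = Ψ̄⁻¹(C₁ × C₂)`, the Euclidean dual satisfies
`C^⊥ = Ψ̄⁻¹(C₁^⊥ × C₂^⊥)`; in particular `C` is Euclidean self-dual iff `C₁` and `C₂`
are. -/
theorem stmt14 (R : Type*) [CommRing R] [Finite R] (n : ℕ)
    (Ψ : AdjoinRoot (X ^ 2 - X : R[X]) ≃+* R × R)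
    (hΨ : ∀ a b : R,
      Ψ (AdjoinRoot.of _ a + AdjoinRoot.of _ b * AdjoinRoot.root _) = (a, a + b))
    (C₁ C₂ : Submodule R (Fin n → R))
    (C : Set (Fin n → AdjoinRoot (X ^ 2 - X : R[X])))
    (hC : C = {c | (fun i => (Ψ (c i)).1) ∈ C₁ ∧ (fun i => (Ψ (c i)).2) ∈ C₂}) :
    ({y | ∀ x ∈ C, ∑ i, x i * y i = 0} : Set (Fin n → AdjoinRoot (X ^ 2 - X : R[X]))) =
      {y | (fun i => (Ψ (y i)).1) ∈ {z : Fin n → R | ∀ x ∈ C₁, ∑ i, x i * z i = 0} ∧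
           (fun i => (Ψ (y i)).2) ∈ {z : Fin n → R | ∀ x ∈ C₂, ∑ i, x i * z i = 0}} ∧
    (C = {y | ∀ x ∈ C, ∑ i, x i * y i = 0} ↔
      ((C₁ : Set (Fin n → R)) = {z | ∀ x ∈ C₁, ∑ i, x i * z i = 0} ∧
       (C₂ : Set (Fin n → R)) = {z | ∀ x ∈ C₂, ∑ i, x i * z i = 0})) :=
  stmt14_general R n Ψ C₁ C₂ C hC
end

section
/- Let R be a finite commutative ring and R_1 = R[v]/(v^2 - v) with conjugation σ(v) = 1 - v. If C ⊆ R_1^n is a Hermitian self-dual code and C = v C_1 + (1-v) C_2 for linear codes C_1, C_2 ⊆ R^n, then C_2 = C_1^⊥ (Euclidean dual); hence C is isomorphic as an R-module to C_1 × C_1^⊥. -/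
open Polynomial

/-!
Since `v` is idempotent, `(a, b) ↦ v a + (1 - v) b` identifies `R × R` with `R₁`, and `σ` swaps
the two factors. Hence the Hermitian product of `v a + (1 - v) b` and `v c + (1 - v) d` is
`v (a ⬝ d) + (1 - v) (b ⬝ c)`. Pairing `(1 - v) z` against the codewords `v a + (1 - v) b`,
self-duality says exactly that `z ∈ C₂ ↔ z ⊥ C₁`; the isomorphism `C ≃ C₁ × C₂` is the
restriction of the identification above.
-/

namespace IdemAdjoin

variable {R : Type*} [CommRing R]

local notation "R₁" => AdjoinRoot (X ^ 2 - X : R[X])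
local notation "𝐯" => AdjoinRoot.root (X ^ 2 - X : R[X])

theorem root_mul_root : 𝐯 * 𝐯 = 𝐯 := by
  have h := AdjoinRoot.eval₂_root (X ^ 2 - X : R[X])
  rw [eval₂_sub, eval₂_X_pow, eval₂_X, sub_eq_zero] at h
  rwa [← pow_two]

variable (R) in
noncomputable def ofPair : R × R →ₐ[R] R₁ where
  toFun p := 𝐯 * AdjoinRoot.of _ p.1 + (1 - 𝐯) * AdjoinRoot.of _ p.2
  map_one' := by simp
  map_mul' p q := by
    simp only [Prod.fst_mul, Prod.snd_mul, map_mul]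
    linear_combination (AdjoinRoot.of _ p.1 - AdjoinRoot.of _ p.2)
      * (AdjoinRoot.of _ q.1 - AdjoinRoot.of _ q.2) * (root_mul_root (R := R)).symm
  map_zero' := by simp
  map_add' p q := by simp only [Prod.fst_add, Prod.snd_add, map_add]; ring
  commutes' r := by simp [AdjoinRoot.algebraMap_eq]; ring

theorem ofPair_apply (a b : R) :
    ofPair R (a, b) = 𝐯 * AdjoinRoot.of _ a + (1 - 𝐯) * AdjoinRoot.of _ b := rfl

variable (R) in
noncomputable def toPair : R₁ →+* R × R :=
  (AdjoinRoot.lift (RingHom.id R) 1 (by simp)).prod (AdjoinRoot.lift (RingHom.id R) 0 (by simp))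

theorem toPair_ofPair : ∀ p : R × R, toPair R (ofPair R p) = p := by
  rintro ⟨a, b⟩
  simp [toPair, ofPair_apply]

theorem ofPair_injective : Function.Injective (ofPair R) :=
  Function.LeftInverse.injective toPair_ofPair

theorem ofPair_eq_zero_iff {p : R × R} : ofPair R p = 0 ↔ p = 0 :=
  map_eq_zero_iff _ ofPair_injective

theorem conj_ofPair {σ : R₁ →+* R₁} (hσR : ∀ a : R, σ (AdjoinRoot.of _ a) = AdjoinRoot.of _ a)
    (hσv : σ 𝐯 = 1 - 𝐯) : ∀ p : R × R, σ (ofPair R p) = ofPair R p.swap := by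
  rintro ⟨a, b⟩
  simp only [ofPair_apply, Prod.swap_prod_mk, map_add, map_mul, map_sub, map_one, hσR, hσv]
  ring

variable (ι : Type*) in
noncomputable def ofPairs : (ι → R) × (ι → R) →ₗ[R] (ι → R₁) where
  toFun p i := ofPair R (p.1 i, p.2 i)
  map_add' p q := funext fun i => map_add (ofPair R) (p.1 i, p.2 i) (q.1 i, q.2 i)
  map_smul' r p := funext fun i => map_smul (ofPair R) r (p.1 i, p.2 i)

theorem ofPairs_apply {ι : Type*} (a b : ι → R) (i : ι) :
    ofPairs ι (a, b) i = ofPair R (a i, b i) := rfl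

theorem ofPairs_injective {ι : Type*} : Function.Injective (ofPairs (R := R) ι) := by
  intro p q h
  have hi i : (p.1 i, p.2 i) = (q.1 i, q.2 i) := ofPair_injective (congrFun h i)
  ext i
  exacts [(Prod.mk.inj (hi i)).1, (Prod.mk.inj (hi i)).2]

theorem sum_ofPairs_mul_conj {ι : Type*} [Fintype ι] {σ : R₁ →+* R₁}
    (hσR : ∀ a : R, σ (AdjoinRoot.of _ a) = AdjoinRoot.of _ a) (hσv : σ 𝐯 = 1 - 𝐯)
    (a b c d : ι → R) :
    ∑ i, ofPairs ι (a, b) i * σ (ofPairs ι (c, d) i) = ofPair R (a ⬝ᵥ d, b ⬝ᵥ c) := by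
  simp only [ofPairs_apply, conj_ofPair hσR hσv, Prod.swap_prod_mk, ← map_mul, ← map_sum,
    Prod.mk_mul_mk]
  congr 1
  ext <;> simp [dotProduct, Prod.fst_sum, Prod.snd_sum]

theorem ofPairs_mem_iff {ι : Type*} {C : Set (ι → R₁)} {C₁ C₂ : Submodule R (ι → R)}
    (hdecomp : C = {c | ∃ a ∈ C₁, ∃ b ∈ C₂, c = ofPairs ι (a, b)}) {a b : ι → R} :
    ofPairs ι (a, b) ∈ C ↔ a ∈ C₁ ∧ b ∈ C₂ := by
  rw [hdecomp]
  constructor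
  · rintro ⟨a', ha', b', hb', h⟩
    obtain ⟨rfl, rfl⟩ := Prod.mk.inj (ofPairs_injective h)
    exact ⟨ha', hb'⟩
  · rintro ⟨ha, hb⟩
    exact ⟨a, ha, b, hb, rfl⟩

theorem coe_snd_eq_orthogonal_fst {ι : Type*} [Fintype ι] {σ : R₁ →+* R₁}
    (hσR : ∀ a : R, σ (AdjoinRoot.of _ a) = AdjoinRoot.of _ a) (hσv : σ 𝐯 = 1 - 𝐯)
    {C : Set (ι → R₁)} {C₁ C₂ : Submodule R (ι → R)}
    (hdecomp : C = {c | ∃ a ∈ C₁, ∃ b ∈ C₂, c = ofPairs ι (a, b)})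
    (hsd : ∀ y, y ∈ C ↔ ∀ x ∈ C, ∑ i, x i * σ (y i) = 0) :
    (C₂ : Set (ι → R)) = {z | ∀ x ∈ C₁, x ⬝ᵥ z = 0} := by
  have hherm (a b z : ι → R) :
      ∑ i, ofPairs ι (a, b) i * σ (ofPairs ι (0, z) i) = ofPair R (a ⬝ᵥ z, 0) := by
    rw [sum_ofPairs_mul_conj hσR hσv, dotProduct_zero]
  ext z
  constructor
  · intro hz x hx
    have h := (hsd _).1 ((ofPairs_mem_iff hdecomp).2 ⟨C₁.zero_mem, hz⟩) _
      ((ofPairs_mem_iff hdecomp).2 ⟨hx, C₂.zero_mem⟩)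
    rw [hherm, ofPair_eq_zero_iff] at h
    exact congrArg Prod.fst h
  · intro hz
    refine ((ofPairs_mem_iff (a := 0) hdecomp).1 ((hsd _).2 fun x hx => ?_)).2
    rw [hdecomp] at hx
    obtain ⟨a, ha, b, -, rfl⟩ := hx
    rw [hherm, hz a ha, Prod.mk_zero_zero, map_zero]

noncomputable def restrictScalarsEquivProd {ι : Type*} {C : Submodule R₁ (ι → R₁)}
    {C₁ C₂ : Submodule R (ι → R)}
    (hdecomp : (C : Set (ι → R₁)) = {c | ∃ a ∈ C₁, ∃ b ∈ C₂, c = ofPairs ι (a, b)}) :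
    C.restrictScalars R ≃ₗ[R] C₁ × C₂ :=
  let f := ofPairs ι ∘ₗ C₁.subtype.prodMap C₂.subtype
  have hf : Function.Injective f :=
    ofPairs_injective.comp (Subtype.val_injective.prodMap Subtype.val_injective)
  have hrange : LinearMap.range f = C.restrictScalars R := by
    ext x
    rw [Submodule.restrictScalars_mem, ← SetLike.mem_coe (p := C), hdecomp]
    constructor
    · rintro ⟨⟨⟨a, ha⟩, ⟨b, hb⟩⟩, rfl⟩
      exact ⟨a, ha, b, hb, rfl⟩
    · rintro ⟨a, ha, b, hb, rfl⟩
      exact ⟨(⟨a, ha⟩, ⟨b, hb⟩), rfl⟩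
  ((LinearEquiv.ofInjective f hf).trans (LinearEquiv.ofEq _ _ hrange)).symm

end IdemAdjoin

theorem stmt15_general (R : Type*) [CommRing R] (n : ℕ)
    (σ : AdjoinRoot (X ^ 2 - X : R[X]) →+* AdjoinRoot (X ^ 2 - X : R[X]))
    (hσR : ∀ a : R, σ (AdjoinRoot.of _ a) = AdjoinRoot.of _ a)
    (hσv : σ (AdjoinRoot.root _) = 1 - AdjoinRoot.root _)
    (C : Submodule (AdjoinRoot (X ^ 2 - X : R[X])) (Fin n → AdjoinRoot (X ^ 2 - X : R[X])))
    (C₁ C₂ : Submodule R (Fin n → R))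
    (hdecomp : (C : Set _) = {c | ∃ a ∈ C₁, ∃ b ∈ C₂, c = fun i =>
      AdjoinRoot.root (X ^ 2 - X : R[X]) * AdjoinRoot.of _ (a i)
        + (1 - AdjoinRoot.root (X ^ 2 - X : R[X])) * AdjoinRoot.of _ (b i)})
    (hsd : ∀ y : Fin n → AdjoinRoot (X ^ 2 - X : R[X]),
      y ∈ C ↔ ∀ x ∈ C, ∑ i, x i * σ (y i) = 0) :
    (C₂ : Set (Fin n → R)) = {z | ∀ x ∈ C₁, ∑ i, x i * z i = 0} ∧
    Nonempty ((C.restrictScalars R) ≃ₗ[R] (C₁ × C₂)) :=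
  ⟨IdemAdjoin.coe_snd_eq_orthogonal_fst hσR hσv hdecomp hsd,
    ⟨IdemAdjoin.restrictScalarsEquivProd hdecomp⟩⟩

/-- If `C ⊆ R₁ⁿ` is Hermitian self-dual (w.r.t. the conjugation `σ` swapping `v` and
`1-v`) and `C = v C₁ + (1-v) C₂` for linear codes `C₁, C₂ ⊆ Rⁿ`, then `C₂ = C₁^⊥`
(Euclidean dual), and `C` is isomorphic as an `R`-module to `C₁ × C₂ = C₁ × C₁^⊥`. -/
theorem stmt15 (R : Type*) [CommRing R] [Finite R] (n : ℕ)
    (σ : AdjoinRoot (X ^ 2 - X : R[X]) →+* AdjoinRoot (X ^ 2 - X : R[X]))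
    (hσR : ∀ a : R, σ (AdjoinRoot.of _ a) = AdjoinRoot.of _ a)
    (hσv : σ (AdjoinRoot.root _) = 1 - AdjoinRoot.root _)
    (C : Submodule (AdjoinRoot (X ^ 2 - X : R[X])) (Fin n → AdjoinRoot (X ^ 2 - X : R[X])))
    (C₁ C₂ : Submodule R (Fin n → R))
    (hdecomp : (C : Set _) = {c | ∃ a ∈ C₁, ∃ b ∈ C₂, c = fun i =>
      AdjoinRoot.root (X ^ 2 - X : R[X]) * AdjoinRoot.of _ (a i)
        + (1 - AdjoinRoot.root (X ^ 2 - X : R[X])) * AdjoinRoot.of _ (b i)})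
    (hsd : ∀ y : Fin n → AdjoinRoot (X ^ 2 - X : R[X]),
      y ∈ C ↔ ∀ x ∈ C, ∑ i, x i * σ (y i) = 0) :
    (C₂ : Set (Fin n → R)) = {z | ∀ x ∈ C₁, ∑ i, x i * z i = 0} ∧
    Nonempty ((C.restrictScalars R) ≃ₗ[R] (C₁ × C₂)) :=
  stmt15_general R n σ hσR hσv C C₁ C₂ hdecomp hsd
end

section
/- Let R be a commutative ring, R_1 = R[v]/(v^2 - v), and θ the automorphism of R_1 fixing R with θ(v) = 1 - v. For the skew shift T_θ(c_0,...,c_{n-1}) = (θ(c_{n-1}), θ(c_0), ..., θ(c_{n-2})) on R_1^n, under the identification Ψ̄ : R_1^n ≅ R^n × R^n, T_θ corresponds to the map (x, y) ↦ (σ(y), σ(x)) where σ is the ordinary cyclic shift on R^n. Consequently, a linear code C = Ψ̄^{-1}(C_1 × C_2) satisfies T_θ(C) ⊆ C if and only if σ(C_2) ⊆ C_1 and σ(C_1) ⊆ C_2; in that case C_1 and C_2 are quasi-cyclic codes of index 2 in the sense that σ^2(C_i) ⊆ C_i. -/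
/-!
Since `θ (a + b v) = (a + b) - b v` and `Ψ` sends these to `(a, a + b)` and `(a + b, a)`,
`Ψ ∘ θ = swap ∘ Ψ`; so under the bijection `Ψ̄` the skew shift becomes `(x, y) ↦ (σ y, σ x)`.
Then `T_θ(C) ⊆ C` reads `σ(C₂) × σ(C₁) ⊆ C₁ × C₂`, which splits into its two components
because codes are nonempty; composing the two inclusions gives `σ²(Cᵢ) ⊆ Cᵢ`.
-/

open Polynomial

theorem Set.image_subset_preimage_prod_iff {X A B : Type*} {φ : X → A × B}
    (hφ : Function.Surjective φ) {T : X → X} {f : B → A} {g : A → B}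
    (hT : ∀ x, φ (T x) = Prod.map f g (φ x).swap) {s : Set A} {t : Set B}
    (hs : s.Nonempty) (ht : t.Nonempty) :
    T '' (φ ⁻¹' s ×ˢ t) ⊆ φ ⁻¹' s ×ˢ t ↔ f '' t ⊆ s ∧ g '' s ⊆ t := by
  rw [← Set.image_subset_iff, ← Set.image_comp,
    show φ ∘ T = Prod.map f g ∘ Prod.swap ∘ φ from funext hT, Set.image_comp, Set.image_comp,
    Set.image_preimage_eq _ hφ, Set.image_swap_prod, Set.prodMap_image_prod,
    Set.prod_subset_prod_iff' ((ht.image f).prod (hs.image g))]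

namespace AdjoinRoot

variable {R : Type*} [CommRing R]

theorem eq_of_fst_add_of_sub_mul_root {Ψ : AdjoinRoot (X ^ 2 - X : R[X]) ≃+* R × R}
    (hΨ : ∀ a b : R, Ψ (of _ a + of _ b * root _) = (a, a + b))
    (x : AdjoinRoot (X ^ 2 - X : R[X])) :
    x = of _ (Ψ x).1 + of _ ((Ψ x).2 - (Ψ x).1) * root _ :=
  Ψ.injective <| by rw [hΨ, add_sub_cancel]

theorem apply_apply_eq_swap {θ : AdjoinRoot (X ^ 2 - X : R[X]) →+* AdjoinRoot (X ^ 2 - X : R[X])}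
    (hθR : ∀ a : R, θ (of _ a) = of _ a) (hθv : θ (root _) = 1 - root _)
    {Ψ : AdjoinRoot (X ^ 2 - X : R[X]) ≃+* R × R}
    (hΨ : ∀ a b : R, Ψ (of _ a + of _ b * root _) = (a, a + b))
    (x : AdjoinRoot (X ^ 2 - X : R[X])) : Ψ (θ x) = (Ψ x).swap := by
  set p := (Ψ x).1
  set q := (Ψ x).2
  have hθx : θ x = of _ q + of _ (p - q) * root _ := by
    rw [eq_of_fst_add_of_sub_mul_root hΨ x, map_add, map_mul, hθR, hθR, hθv, map_sub, map_sub]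
    ring
  rw [hθx, hΨ, add_sub_cancel]; rfl

end AdjoinRoot

/-- With `θ` the automorphism of `R₁` swapping `v` and `1-v` and the skew shift
`T_θ(c) = (θ(c_{n-1}), θ(c_0), …)`: under `Ψ̄ : R₁ⁿ ≅ Rⁿ × Rⁿ`, `T_θ` corresponds to
`(x, y) ↦ (σ(y), σ(x))` with `σ` the cyclic shift; consequently for
`Ψ̄(C) = C₁ × C₂` one has `T_θ(C) ⊆ C ↔ (σ(C₂) ⊆ C₁ ∧ σ(C₁) ⊆ C₂)`, and in that case
`σ²(Cᵢ) ⊆ Cᵢ` for `i = 1, 2`. -/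
theorem stmt16 (R : Type*) [CommRing R] (n : ℕ) [NeZero n]
    (θ : AdjoinRoot (X ^ 2 - X : R[X]) →+* AdjoinRoot (X ^ 2 - X : R[X]))
    (hθR : ∀ a : R, θ (AdjoinRoot.of _ a) = AdjoinRoot.of _ a)
    (hθv : θ (AdjoinRoot.root _) = 1 - AdjoinRoot.root _)
    (Ψ : AdjoinRoot (X ^ 2 - X : R[X]) ≃+* R × R)
    (hΨ : ∀ a b : R,
      Ψ (AdjoinRoot.of _ a + AdjoinRoot.of _ b * AdjoinRoot.root _) = (a, a + b))
    (C : Submodule (AdjoinRoot (X ^ 2 - X : R[X])) (Fin n → AdjoinRoot (X ^ 2 - X : R[X])))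
    (C₁ C₂ : Submodule R (Fin n → R))
    (hC : (C : Set _) = {c : Fin n → AdjoinRoot (X ^ 2 - X : R[X]) | (fun i => (Ψ (c i)).1) ∈ C₁ ∧ (fun i => (Ψ (c i)).2) ∈ C₂}) :
    (∀ c : Fin n → AdjoinRoot (X ^ 2 - X : R[X]),
      (fun i => (Ψ (θ (c (i - 1)))).1) = (fun i => (Ψ (c (i - 1))).2) ∧
      (fun i => (Ψ (θ (c (i - 1)))).2) = (fun i => (Ψ (c (i - 1))).1)) ∧
    (((fun c : Fin n → AdjoinRoot (X ^ 2 - X : R[X]) => fun i => θ (c (i - 1))) ''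
          (C : Set _) ⊆ (C : Set _)) ↔
        ((fun z : Fin n → R => fun i => z (i - 1)) '' (C₂ : Set _) ⊆ (C₁ : Set _) ∧
         (fun z : Fin n → R => fun i => z (i - 1)) '' (C₁ : Set _) ⊆ (C₂ : Set _))) ∧
    (((fun c : Fin n → AdjoinRoot (X ^ 2 - X : R[X]) => fun i => θ (c (i - 1))) ''
          (C : Set _) ⊆ (C : Set _)) →
        ((fun z : Fin n → R => fun i => z (i - 1 - 1)) '' (C₁ : Set _) ⊆ (C₁ : Set _) ∧
         (fun z : Fin n → R => fun i => z (i - 1 - 1)) '' (C₂ : Set _) ⊆ (C₂ : Set _))) := by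
  have hshift : ∀ c : Fin n → AdjoinRoot (X ^ 2 - X : R[X]),
      (fun i => (Ψ (θ (c (i - 1)))).1) = (fun i => (Ψ (c (i - 1))).2) ∧
      (fun i => (Ψ (θ (c (i - 1)))).2) = (fun i => (Ψ (c (i - 1))).1) := fun c =>
    have hswap := AdjoinRoot.apply_apply_eq_swap hθR hθv hΨ
    ⟨funext fun _ => congrArg Prod.fst (hswap _), funext fun _ => congrArg Prod.snd (hswap _)⟩
  let Ψbar := (Equiv.piCongrRight fun _ : Fin n => Ψ.toEquiv).trans
    (Equiv.arrowProdEquivProdArrow _ _ _)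
  have hiff := Set.image_subset_preimage_prod_iff Ψbar.surjective
    (T := fun c i => θ (c (i - 1))) (f := fun z i => z (i - 1)) (g := fun z i => z (i - 1))
    (fun c => Prod.ext (hshift c).1 (hshift c).2) ⟨0, C₁.zero_mem⟩ ⟨0, C₂.zero_mem⟩
  rw [show Ψbar ⁻¹' (C₁ ×ˢ C₂) = C from hC.symm] at hiff
  refine ⟨hshift, hiff, fun h => ?_⟩
  obtain ⟨h₁, h₂⟩ := hiff.mp h
  simp only [← Set.mapsTo_iff_image_subset] at h₁ h₂ ⊢
  exact ⟨h₁.comp h₂, h₂.comp h₁⟩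
end
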